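/- arXiv:2209.13798 — 2 statements merged into one kernel-verified Lean document; each statement's English description precedes it below -/
import Mathlib

section
/- Let d > 1 be an integer and A = (a_0, …, a_k) a normal d-collection with a_k ≠ 0. Let j_1 < j_2 < … < j_s = k be its critical indices (j is critical if j = k or a_j < d − 1), set j_0 = −1, and let A_i be the d-collection consisting of the entries a_t of A with j_{i−1} < t ≤ j_i (and 0 elsewhere). Then every element x of span_d(A) is uniquely representable as x = x_1 + … + x_s where each x_i is a multiple of d^{j_{i−1}+1} lying in {0, d^{j_{i−1}+1}, 2·d^{j_{i−1}+1}, …, sum_d(A_i)}; conversely every such sum lies in span_d(A). -/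
/-- The span of a `d`-collection `A : ℕ →₀ ℕ` (where `A i` is the multiplicity of the
token `d ^ i`): the set of all sums `∑ i, c i * d ^ i` over sub-collections `c ≤ A`. -/
def dspan (d : ℕ) (A : ℕ →₀ ℕ) : Set ℕ :=
  {n : ℕ | ∃ c : ℕ →₀ ℕ, (∀ i, c i ≤ A i) ∧ n = c.sum (fun i m => m * d ^ i)}

/-- The total sum `∑ i, a_i * d ^ i` of a `d`-collection. -/
def dsum (d : ℕ) (A : ℕ →₀ ℕ) : ℕ := A.sum (fun i m => m * d ^ i)

/-- Elementary exchange at index `i`: replace `d` tokens `d ^ i` by one token `d ^ (i+1)`. -/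
noncomputable def exch (d i : ℕ) (A : ℕ →₀ ℕ) : ℕ →₀ ℕ :=
  A - Finsupp.single i d + Finsupp.single (i + 1) 1

/-!
Cutting `A` after its critical indices splits it into blocks whose tokens, except the top one,
all have multiplicity at least `d - 1`. A block on the indices `m, …, n` spans exactly the
multiples of `d ^ m` up to its sum: choose greedily how many tokens `d ^ n` to use; the rest is
reached by the lower tokens, which sum to at least `d ^ n - d ^ m`. Spans are additive,
`span (B + C) = span B + span C`, which gives the description of `span_d(A)`.

Uniqueness is a carry argument: the top token of each block but the last has multiplicity at
most `d - 2`, so by normality all blocks below `b j` sum to less than `d ^ (b j)`. Hence, reading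
the blocks from the top, each part is determined by the total modulo `d ^ (b j)`.
-/

open Finset Pointwise

section Collections

variable {d : ℕ}

lemma dsum_add (B C : ℕ →₀ ℕ) : dsum d (B + C) = dsum d B + dsum d C :=
  Finsupp.sum_add_index' (fun _ => zero_mul _) fun _ _ _ => add_mul _ _ _

lemma dsum_sum {ι : Type*} (s : Finset ι) (B : ι → ℕ →₀ ℕ) :
    dsum d (∑ i ∈ s, B i) = ∑ i ∈ s, dsum d (B i) :=
  (Finsupp.sum_finsetSum_index (fun _ => zero_mul _) fun _ _ _ => add_mul _ _ _).symm

lemma dsum_single (j a : ℕ) : dsum d (Finsupp.single j a) = a * d ^ j :=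
  Finsupp.sum_single_index (zero_mul _)

lemma dsum_mono {B C : ℕ →₀ ℕ} (h : B ≤ C) : dsum d B ≤ dsum d C := by
  rw [← add_tsub_cancel_of_le h, dsum_add]
  exact Nat.le_add_right _ _

lemma dsum_eq_sum_of_support_subset {B : ℕ →₀ ℕ} {S : Finset ℕ} (h : B.support ⊆ S) :
    dsum d B = ∑ t ∈ S, B t * d ^ t :=
  Finsupp.sum_of_support_subset B h _ fun _ _ => zero_mul _

lemma sum_le_dsum (B : ℕ →₀ ℕ) (S : Finset ℕ) : ∑ t ∈ S, B t * d ^ t ≤ dsum d B := by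
  classical
  rw [dsum_eq_sum_of_support_subset (subset_union_right (s₁ := S))]
  exact sum_le_sum_of_subset subset_union_left

lemma dsum_filter_lt (A : ℕ →₀ ℕ) (n : ℕ) :
    dsum d (A.filter (· < n)) = ∑ t ∈ range n, A t * d ^ t := by
  rw [dsum_eq_sum_of_support_subset (S := range n)]
  · refine sum_congr rfl fun t ht => ?_
    rw [Finsupp.filter_apply_pos (· < n) A (mem_range.1 ht)]
  · intro t ht
    exact mem_range.2 (Finset.mem_filter.1 ht).2

lemma pow_dvd_dsum {c : ℕ →₀ ℕ} {m : ℕ} (hc : ∀ t, c t ≠ 0 → m ≤ t) : d ^ m ∣ dsum d c :=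
  dvd_sum fun t ht => (pow_dvd_pow d (hc t (Finsupp.mem_support_iff.1 ht))).mul_left _

lemma mem_dspan_iff {A : ℕ →₀ ℕ} {x : ℕ} : x ∈ dspan d A ↔ ∃ c ≤ A, x = dsum d c := by
  simp only [dspan, Finsupp.le_def]
  rfl

lemma dspan_zero : dspan d 0 = 0 := by
  ext x
  simp [mem_dspan_iff, dsum]

lemma dspan_add (B C : ℕ →₀ ℕ) : dspan d (B + C) = dspan d B + dspan d C := by
  ext x
  simp only [mem_dspan_iff, Set.mem_add]
  constructor
  · rintro ⟨c, hc, rfl⟩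
    refine ⟨_, ⟨c ⊓ B, inf_le_right, rfl⟩, _, ⟨c - c ⊓ B, fun t => ?_, rfl⟩, ?_⟩
    · have := hc t
      simp only [Finsupp.tsub_apply, Finsupp.inf_apply, Finsupp.add_apply] at this ⊢
      omega
    · rw [← dsum_add, add_tsub_cancel_of_le inf_le_left]
  · rintro ⟨_, ⟨c₁, h₁, rfl⟩, _, ⟨c₂, h₂, rfl⟩, rfl⟩
    exact ⟨c₁ + c₂, add_le_add h₁ h₂, (dsum_add _ _).symm⟩

lemma dspan_sum {ι : Type*} (s : Finset ι) (B : ι → ℕ →₀ ℕ) :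
    dspan d (∑ i ∈ s, B i) = ∑ i ∈ s, dspan d (B i) := by
  classical
  induction s using Finset.induction_on with
  | empty => simp [dspan_zero]
  | insert i s hi ih => rw [sum_insert hi, sum_insert hi, dspan_add, ih]

end Collections

section Estimates

variable {d : ℕ}

lemma sum_Ico_pred_mul_pow_add_pow (hd : 1 ≤ d) {m n : ℕ} (hmn : m ≤ n) :
    ∑ t ∈ Ico m n, (d - 1) * d ^ t + d ^ m = d ^ n := by
  induction n, hmn using Nat.le_induction with
  | base => simp
  | succ n hmn ih =>
    rw [sum_Ico_succ_top hmn, add_right_comm, ih, pow_succ]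
    obtain ⟨e, rfl⟩ : ∃ e, d = e + 1 := ⟨d - 1, by omega⟩
    simp only [Nat.add_sub_cancel]
    ring

lemma pow_le_dsum_add_pow (hd : 1 ≤ d) {B : ℕ →₀ ℕ} {m n : ℕ} (hmn : m ≤ n)
    (hB : ∀ t, m ≤ t → t < n → d - 1 ≤ B t) : d ^ n ≤ dsum d B + d ^ m :=
  calc d ^ n = ∑ t ∈ Ico m n, (d - 1) * d ^ t + d ^ m := (sum_Ico_pred_mul_pow_add_pow hd hmn).symm
    _ ≤ ∑ t ∈ Ico m n, B t * d ^ t + d ^ m := by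
      gcongr with t ht
      exact hB t (mem_Ico.1 ht).1 (mem_Ico.1 ht).2
    _ ≤ dsum d B + d ^ m := by grw [sum_le_dsum]

/-- Normality bounds the tokens below `m` by `2 * (d ^ m - 1)`, less than the room of at least
`2 * d ^ m` left at index `m`. -/
lemma dsum_filter_lt_succ_lt_pow (hd : 1 < d) {A : ℕ →₀ ℕ} (hA : ∀ t, A t ≤ 2 * (d - 1))
    {m : ℕ} (hm : A m < d - 1) : dsum d (A.filter (· < m + 1)) < d ^ (m + 1) := by
  have hgeom := sum_Ico_pred_mul_pow_add_pow hd.le (Nat.zero_le m)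
  rw [← range_eq_Ico, pow_zero] at hgeom
  have hlow : ∑ t ∈ range m, A t * d ^ t ≤ 2 * ∑ t ∈ range m, (d - 1) * d ^ t := by
    rw [mul_sum]
    refine sum_le_sum fun t _ => ?_
    rw [← mul_assoc]
    exact Nat.mul_le_mul_right _ (hA t)
  have htop : A m * d ^ m + 2 * d ^ m ≤ d * d ^ m := by
    rw [← add_mul]
    exact Nat.mul_le_mul_right _ (by omega)
  rw [dsum_filter_lt, sum_range_succ, pow_succ, mul_comm _ d]
  omega

end Estimates

lemma add_le_of_dvd_of_lt {a x y : ℕ} (hx : a ∣ x) (hy : a ∣ y) (h : x < y) : x + a ≤ y := by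
  obtain ⟨u, rfl⟩ := hx
  obtain ⟨v, rfl⟩ := hy
  have : u < v := Nat.lt_of_mul_lt_mul_left h
  calc a * u + a = a * (u + 1) := by ring
    _ ≤ a * v := Nat.mul_le_mul_left _ this

section Blocks

variable {d : ℕ}

/-- If not all top tokens are used, the remainder is `x % d ^ j`: a multiple of `d ^ m` below
`d ^ j`, hence at most `d ^ j - d ^ m ≤ dsum d B`. -/
lemma exists_top_count (hd : 1 ≤ d) {B : ℕ →₀ ℕ} {m j x a : ℕ} (hmj : m ≤ j)
    (hfull : ∀ t, m ≤ t → t < j → d - 1 ≤ B t) (hdvd : d ^ m ∣ x) (hx : x ≤ dsum d B + a * d ^ j) :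
    ∃ q ≤ a, q * d ^ j ≤ x ∧ x - q * d ^ j ≤ dsum d B := by
  by_cases h : x / d ^ j ≤ a
  · refine ⟨x / d ^ j, h, Nat.div_mul_le_self _ _, ?_⟩
    have hmod : d ^ m ∣ x % d ^ j := (Nat.dvd_mod_iff (pow_dvd_pow d hmj)).2 hdvd
    have := add_le_of_dvd_of_lt hmod (pow_dvd_pow d hmj) (Nat.mod_lt _ (by positivity))
    have := pow_le_dsum_add_pow hd hmj hfull
    rw [mul_comm, ← Nat.mod_eq_sub_mul_div]
    omega
  · refine ⟨a, le_rfl, ?_, by omega⟩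
    exact (Nat.le_div_iff_mul_le (by positivity)).1 (by omega)

lemma mem_dspan_of_dvd_of_le (hd : 1 ≤ d) {m n : ℕ} (hmn : m ≤ n) {B : ℕ →₀ ℕ}
    (hsupp : ∀ t, B t ≠ 0 → m ≤ t ∧ t ≤ n) (hfull : ∀ t, m ≤ t → t < n → d - 1 ≤ B t)
    {x : ℕ} (hdvd : d ^ m ∣ x) (hx : x ≤ dsum d B) : x ∈ dspan d B := by
  induction n, hmn using Nat.le_induction generalizing B x with
  | base =>
    have hB : B = Finsupp.single m (B m) := by
      ext t
      by_cases ht : t = m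
      · simp [ht]
      · simp only [Finsupp.single_apply, Ne.symm ht, if_false]
        by_contra h
        have := hsupp t h
        omega
    obtain ⟨y, rfl⟩ := hdvd
    rw [hB, dsum_single, mul_comm] at hx
    refine mem_dspan_iff.2 ⟨Finsupp.single m y, ?_, by rw [dsum_single, mul_comm]⟩
    rw [Finsupp.single_le_iff]
    exact Nat.le_of_mul_le_mul_right hx (by positivity)
  | succ n hmn ih =>
    set B' := B.erase (n + 1)
    have hB : B = B' + Finsupp.single (n + 1) (B (n + 1)) := (Finsupp.erase_add_single _ _).symm
    have hB' : ∀ t, t ≠ n + 1 → B' t = B t := fun t ht => Finsupp.erase_ne ht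
    have hfull' : ∀ t, m ≤ t → t < n + 1 → d - 1 ≤ B' t := fun t h1 h2 =>
      hB' t (by omega) ▸ hfull t h1 h2
    rw [hB, dsum_add, dsum_single] at hx
    obtain ⟨q, hq, hqx, hrest⟩ := exists_top_count hd (by omega) hfull' hdvd hx
    rw [hB, dspan_add, ← Nat.sub_add_cancel hqx]
    refine Set.add_mem_add (ih (fun t ht => ?_) (fun t h1 h2 => hfull' t h1 (by omega)) ?_ hrest)
      (mem_dspan_iff.2 ⟨Finsupp.single (n + 1) q, Finsupp.single_le_iff.2 (by simpa), ?_⟩)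
    · have hne : t ≠ n + 1 := fun h => ht (h ▸ Finsupp.erase_same)
      have := hsupp t (hB' t hne ▸ ht)
      omega
    · exact Nat.dvd_sub hdvd (Dvd.dvd.mul_left (pow_dvd_pow d (by omega)) _)
    · rw [dsum_single]

theorem dspan_eq_of_full (hd : 1 ≤ d) {m n : ℕ} (hmn : m ≤ n) {B : ℕ →₀ ℕ}
    (hsupp : ∀ t, B t ≠ 0 → m ≤ t ∧ t ≤ n) (hfull : ∀ t, m ≤ t → t < n → d - 1 ≤ B t) :
    dspan d B = {x | d ^ m ∣ x ∧ x ≤ dsum d B} := by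
  ext x
  refine ⟨fun hx => ?_, fun hx => mem_dspan_of_dvd_of_le hd hmn hsupp hfull hx.1 hx.2⟩
  obtain ⟨c, hc, rfl⟩ := mem_dspan_iff.1 hx
  refine ⟨pow_dvd_dsum fun t ht => (hsupp t fun h => ?_).1, dsum_mono hc⟩
  exact ht (Nat.eq_zero_of_le_zero (h ▸ hc t))

end Blocks

lemma eq_of_sum_range_eq_of_dvd {u f g : ℕ → ℕ} {n : ℕ}
    (hf : ∀ j < n, u j ∣ f j ∧ ∑ i ∈ range j, f i < u j)
    (hg : ∀ j < n, u j ∣ g j ∧ ∑ i ∈ range j, g i < u j)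
    (h : ∑ i ∈ range n, f i = ∑ i ∈ range n, g i) : ∀ i < n, f i = g i := by
  induction n with
  | zero => intro i hi; omega
  | succ n ih =>
    obtain ⟨⟨p, hp⟩, hfn⟩ := hf n n.lt_succ_self
    obtain ⟨⟨q, hq⟩, hgn⟩ := hg n n.lt_succ_self
    rw [sum_range_succ, sum_range_succ, hp, hq] at h
    have hlow : ∑ i ∈ range n, f i = ∑ i ∈ range n, g i := by
      have := congrArg (· % u n) h
      simpa only [Nat.add_mul_mod_self_left, Nat.mod_eq_of_lt hfn, Nat.mod_eq_of_lt hgn] using this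
    intro i hi
    rcases Nat.lt_succ_iff_lt_or_eq.1 hi with hi | rfl
    · exact ih (fun j hj => hf j (by omega)) (fun j hj => hg j (by omega)) hlow i hi
    · rw [hp, hq]
      omega

section Critical

/-- With `b i = j_i + 1` (and `j_0 = -1`) this is the paper's `A_{i+1}`. -/
def block (A : ℕ →₀ ℕ) (b : ℕ → ℕ) (i : ℕ) : ℕ →₀ ℕ :=
  A.filter (fun t => b i ≤ t ∧ t < b (i + 1))

variable {d k s : ℕ} {A : ℕ →₀ ℕ} {b : ℕ → ℕ}

lemma sub_one_le_of_mem_block (hbmono : ∀ i < s, b i < b (i + 1)) (hbs : b s = k + 1)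
    (hcrit : ∀ t ≤ k, ((t = k ∨ A t < d - 1) ↔ ∃ i, 0 < i ∧ i ≤ s ∧ b i = t + 1))
    {i t : ℕ} (hi : i < s) (hit : b i ≤ t) (hti : t + 1 < b (i + 1)) : d - 1 ≤ A t := by
  have hb : StrictMonoOn b (Set.Iic s) := strictMonoOn_Iic_of_lt_succ hbmono
  have hi' : i + 1 ∈ Set.Iic s := Set.mem_Iic.2 hi
  have : b (i + 1) ≤ b s := hb.monotoneOn hi' Set.self_mem_Iic hi
  by_contra! hAt
  obtain ⟨j, -, hjs, hbj⟩ := (hcrit t (by omega)).1 (Or.inr hAt)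
  have h1 : i < j := (hb.lt_iff_lt (Set.mem_Iic.2 hi.le) hjs).1 (by omega)
  have h2 : j < i + 1 := (hb.lt_iff_lt hjs hi').1 (by omega)
  omega

lemma lt_sub_one_at_block_end (hbmono : ∀ i < s, b i < b (i + 1)) (hbs : b s = k + 1)
    (hcrit : ∀ t ≤ k, ((t = k ∨ A t < d - 1) ↔ ∃ i, 0 < i ∧ i ≤ s ∧ b i = t + 1))
    {j : ℕ} (hj0 : 0 < j) (hjs : j < s) : A (b j - 1) < d - 1 := by
  have hb : StrictMonoOn b (Set.Iic s) := strictMonoOn_Iic_of_lt_succ hbmono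
  have h0 : b 0 < b j := hb (Set.mem_Iic.2 (Nat.zero_le s)) hjs.le hj0
  have h1 : b j < b s := hb hjs.le Set.self_mem_Iic hjs
  have := (hcrit (b j - 1) (by omega)).2 ⟨j, hj0, hjs.le, by omega⟩
  omega

lemma dspan_block (hd : 1 < d) (hbmono : ∀ i < s, b i < b (i + 1)) (hbs : b s = k + 1)
    (hcrit : ∀ t ≤ k, ((t = k ∨ A t < d - 1) ↔ ∃ i, 0 < i ∧ i ≤ s ∧ b i = t + 1))
    {i : ℕ} (hi : i < s) :
    dspan d (block A b i) = {x | d ^ b i ∣ x ∧ x ≤ dsum d (block A b i)} := by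
  have := hbmono i hi
  refine dspan_eq_of_full hd.le (n := b (i + 1) - 1) (by omega) (fun t ht => ?_) fun t h1 h2 => ?_
  · by_contra h
    exact ht (Finsupp.filter_apply_neg _ _ (by omega))
  · rw [block, Finsupp.filter_apply_pos _ _ ⟨h1, by omega⟩]
    exact sub_one_le_of_mem_block hbmono hbs hcrit hi h1 (by omega)

lemma filter_lt_eq_sum_block (hb0 : b 0 = 0) (hbmono : ∀ i < s, b i < b (i + 1)) :
    ∀ {j : ℕ}, j ≤ s → A.filter (· < b j) = ∑ i ∈ range j, block A b i
  | 0, _ => by simp [hb0, Finsupp.filter_eq_zero_iff]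
  | j + 1, hj => by
    rw [sum_range_succ, ← filter_lt_eq_sum_block hb0 hbmono (by omega : j ≤ s)]
    have := hbmono j (by omega)
    ext t
    simp only [block, Finsupp.add_apply, Finsupp.filter_apply]
    split_ifs <;> omega

lemma dspan_eq_sum_blocks (hd : 1 < d) (hsupp : ∀ t, A t ≠ 0 → t ≤ k) (hb0 : b 0 = 0)
    (hbmono : ∀ i < s, b i < b (i + 1)) (hbs : b s = k + 1)
    (hcrit : ∀ t ≤ k, ((t = k ∨ A t < d - 1) ↔ ∃ i, 0 < i ∧ i ≤ s ∧ b i = t + 1)) :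
    dspan d A = ∑ i ∈ range s, {x | d ^ b i ∣ x ∧ x ≤ dsum d (block A b i)} := by
  have hA : A.filter (· < b s) = A :=
    (Finsupp.filter_eq_self_iff _ _).2 fun t ht => hbs ▸ Nat.lt_succ_of_le (hsupp t ht)
  calc dspan d A = dspan d (A.filter (· < b s)) := by rw [hA]
    _ = ∑ i ∈ range s, dspan d (block A b i) := by
      rw [filter_lt_eq_sum_block hb0 hbmono le_rfl, dspan_sum]
    _ = _ := sum_congr rfl fun i hi => dspan_block hd hbmono hbs hcrit (mem_range.1 hi)

lemma sum_dsum_block_lt_pow (hd : 1 < d) (hnorm : ∀ t, A t ≤ 2 * (d - 1)) (hb0 : b 0 = 0)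
    (hbmono : ∀ i < s, b i < b (i + 1)) (hbs : b s = k + 1)
    (hcrit : ∀ t ≤ k, ((t = k ∨ A t < d - 1) ↔ ∃ i, 0 < i ∧ i ≤ s ∧ b i = t + 1))
    {j : ℕ} (hj : j < s) : ∑ i ∈ range j, dsum d (block A b i) < d ^ b j := by
  rcases Nat.eq_zero_or_pos j with rfl | hj0
  · simpa using pow_pos (by omega) _
  have hAm := lt_sub_one_at_block_end hbmono hbs hcrit hj0 hj
  have : b 0 < b j := strictMonoOn_Iic_of_lt_succ hbmono (Set.mem_Iic.2 (Nat.zero_le s)) hj.le hj0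
  obtain ⟨m, hm⟩ : ∃ m, b j = m + 1 := Nat.exists_eq_add_one.2 (by omega)
  rw [hm, Nat.add_sub_cancel] at hAm
  rw [← dsum_sum, ← filter_lt_eq_sum_block hb0 hbmono hj.le, hm]
  exact dsum_filter_lt_succ_lt_pow hd hnorm hAm

end Critical

theorem stmt_7_general (d : ℕ) (hd : 1 < d) (A : ℕ →₀ ℕ) (k : ℕ)
    (hsupp : ∀ t, A t ≠ 0 → t ≤ k)
    (hnorm : ∀ t, A t ≤ 2 * (d - 1))
    (s : ℕ) (b : ℕ → ℕ)
    (hb0 : b 0 = 0) (hbmono : ∀ i < s, b i < b (i + 1)) (hbs : b s = k + 1)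
    (hcrit : ∀ t ≤ k, ((t = k ∨ A t < d - 1) ↔ ∃ i, 0 < i ∧ i ≤ s ∧ b i = t + 1)) :
    ∀ x : ℕ,
      (x ∈ dspan d A ↔ ∃ f : ℕ → ℕ,
        (∀ i < s, d ^ (b i) ∣ f i ∧
          f i ≤ dsum d (A.filter (fun t => b i ≤ t ∧ t < b (i + 1)))) ∧
        x = ∑ i ∈ Finset.range s, f i) ∧
      (∀ f g : ℕ → ℕ,
        (∀ i < s, d ^ (b i) ∣ f i ∧
          f i ≤ dsum d (A.filter (fun t => b i ≤ t ∧ t < b (i + 1)))) →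
        (∀ i < s, d ^ (b i) ∣ g i ∧
          g i ≤ dsum d (A.filter (fun t => b i ≤ t ∧ t < b (i + 1)))) →
        (∑ i ∈ Finset.range s, f i) = ∑ i ∈ Finset.range s, g i →
        ∀ i < s, f i = g i) := by
  have hcarry : ∀ f : ℕ → ℕ, (∀ i < s, d ^ b i ∣ f i ∧ f i ≤ dsum d (block A b i)) →
      ∀ j < s, d ^ b j ∣ f j ∧ ∑ i ∈ range j, f i < d ^ b j := fun f hf j hj =>
    ⟨(hf j hj).1, (sum_le_sum fun i hi => (hf i ((mem_range.1 hi).trans hj)).2).trans_lt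
      (sum_dsum_block_lt_pow hd hnorm hb0 hbmono hbs hcrit hj)⟩
  refine fun x =>
    ⟨?_, fun f g hf hg hfg => eq_of_sum_range_eq_of_dvd (hcarry f hf) (hcarry g hg) hfg⟩
  rw [dspan_eq_sum_blocks hd hsupp hb0 hbmono hbs hcrit, Set.mem_finsetSum]
  constructor
  · rintro ⟨f, hf, rfl⟩
    exact ⟨f, fun i hi => hf (mem_range.2 hi), rfl⟩
  · rintro ⟨f, hf, rfl⟩
    exact ⟨f, fun hi => hf _ (mem_range.1 hi), rfl⟩

/-- Decomposition of a normal `d`-collection along its critical indices.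
Here the boundaries `b 0 = 0 < b 1 < … < b s = k + 1` encode `b i = j_i + 1` (with
`j_0 = -1`), the criticality hypothesis says the critical indices are exactly the
`b i - 1` for `1 ≤ i ≤ s`, and the `i`-th part `A_i` (for `0 ≤ i < s`, shifted to
`0`-based indexing) consists of the tokens `d^t` of `A` with `b i ≤ t < b (i+1)`.
Every `x ∈ span_d(A)` is uniquely a sum `x = x_0 + … + x_{s-1}` with `x_i` a multiple
of `d ^ (b i)` not exceeding `sum_d(A_i)`, and conversely every such sum is in the span. -/
theorem stmt_7 (d : ℕ) (hd : 1 < d) (A : ℕ →₀ ℕ) (k : ℕ)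
    (hk : A k ≠ 0) (hsupp : ∀ t, A t ≠ 0 → t ≤ k)
    (hnorm : ∀ t, A t ≤ 2 * (d - 1))
    (s : ℕ) (hs : 0 < s) (b : ℕ → ℕ)
    (hb0 : b 0 = 0) (hbmono : ∀ i < s, b i < b (i + 1)) (hbs : b s = k + 1)
    (hcrit : ∀ t ≤ k, ((t = k ∨ A t < d - 1) ↔ ∃ i, 0 < i ∧ i ≤ s ∧ b i = t + 1)) :
    ∀ x : ℕ,
      (x ∈ dspan d A ↔ ∃ f : ℕ → ℕ,
        (∀ i < s, d ^ (b i) ∣ f i ∧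
          f i ≤ dsum d (A.filter (fun t => b i ≤ t ∧ t < b (i + 1)))) ∧
        x = ∑ i ∈ Finset.range s, f i) ∧
      (∀ f g : ℕ → ℕ,
        (∀ i < s, d ^ (b i) ∣ f i ∧
          f i ≤ dsum d (A.filter (fun t => b i ≤ t ∧ t < b (i + 1)))) →
        (∀ i < s, d ^ (b i) ∣ g i ∧
          g i ≤ dsum d (A.filter (fun t => b i ≤ t ∧ t < b (i + 1)))) →
        (∑ i ∈ Finset.range s, f i) = ∑ i ∈ Finset.range s, g i →
        ∀ i < s, f i = g i) :=
  stmt_7_general d hd A k hsupp hnorm s b hb0 hbmono hbs hcrit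
end

section
/- Let d > 1 be an integer. For every d-collection A there exists a unique normal d-collection B with span_d(A) = span_d(B). -/
def fspan (d N : ℕ) (b : ℕ → ℕ) : Set ℕ :=
  {n | ∃ c : ℕ → ℕ, (∀ i, c i ≤ b i) ∧ n = ∑ i ∈ Finset.range N, c i * d ^ i}

lemma exch_apply (d i : ℕ) (A : ℕ →₀ ℕ) (j : ℕ) :
    exch d i A j = (A j - (if j = i then d else 0)) + (if j = i + 1 then 1 else 0) := by
  simp only [exch, Finsupp.add_apply, Finsupp.tsub_apply, Finsupp.single_apply]
  have h1 : (if i = j then d else 0) = (if j = i then d else 0) := by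
    split <;> split <;> omega
  have h2 : (if i + 1 = j then 1 else 0) = (if j = i + 1 then 1 else 0) := by
    split <;> split <;> omega
  rw [h1, h2]

lemma support_bound {A : ℕ →₀ ℕ} {j N : ℕ} (h : A.support.sup id + 1 ≤ N) (hj : N ≤ j) :
    A j = 0 := by
  by_contra hc
  have h2 := Finset.le_sup (f := id) (Finsupp.mem_support_iff.2 hc)
  simp only [id] at h2
  omega

lemma fsum_eq {N : ℕ} {A : ℕ →₀ ℕ} (f : ℕ → ℕ → ℕ) (hf : ∀ i, f i 0 = 0)
    (hN : ∀ j, N ≤ j → A j = 0) :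
    A.sum f = ∑ j ∈ Finset.range N, f j (A j) := by
  apply Finsupp.sum_of_support_subset _ _ _ (fun i _ => hf i)
  intro j hj
  simp only [Finsupp.mem_support_iff] at hj
  simp only [Finset.mem_range]
  by_contra h
  exact hj (hN j (not_lt.1 h))
lemma dspan_eq_fspan {d N : ℕ} {A : ℕ →₀ ℕ} (hN : ∀ j, N ≤ j → A j = 0) :
    dspan d A = fspan d N (A ·) := by
  ext n; constructor
  · rintro ⟨c, hc, rfl⟩
    refine ⟨c, hc, ?_⟩
    rw [Finsupp.sum_of_support_subset c ?_ _ (by intros; simp)]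
    intro j hj
    simp only [Finsupp.mem_support_iff] at hj
    simp only [Finset.mem_range]
    by_contra h
    have := hc j
    rw [hN j (not_lt.1 h)] at this
    omega
  · rintro ⟨c, hc, rfl⟩
    refine ⟨Finsupp.onFinset (Finset.range N) (fun j => if j < N then c j else 0)
      (fun j h => by simp only [Finset.mem_range]; by_contra hh; simp [hh] at h), ?_, ?_⟩
    · intro i
      simp only [Finsupp.onFinset_apply]
      split
      · exact hc i
      · exact Nat.zero_le _
    · rw [Finsupp.sum_of_support_subset _ (Finsupp.support_onFinset_subset) _ (by intros; simp)]
      apply Finset.sum_congr rfl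
      intro j hj
      simp only [Finset.mem_range] at hj
      simp [Finsupp.onFinset_apply, hj]

lemma sum_exch {d N i : ℕ} {c1 c2 : ℕ → ℕ}
    (h : ∀ j, j ≠ i → j ≠ i + 1 → c1 j = c2 j)
    (hi : c2 i = c1 i + d) (hi1 : c1 (i+1) = c2 (i+1) + 1) (hN : i + 1 < N) :
    ∑ j ∈ Finset.range N, c1 j * d ^ j = ∑ j ∈ Finset.range N, c2 j * d ^ j := by
  have key : ∀ j, c1 j * d ^ j + (if j = i then d * d ^ i else 0)
      = c2 j * d ^ j + (if j = i + 1 then d ^ (i+1) else 0) := by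
    intro j
    by_cases hj : j = i
    · subst hj
      rw [if_pos rfl, if_neg (show j ≠ j + 1 by omega), hi]
      ring
    · by_cases hj1 : j = i + 1
      · subst hj1
        rw [if_neg hj, if_pos rfl, hi1, pow_succ]
        ring
      · rw [if_neg hj, if_neg hj1, h j hj hj1]
  have hsum := Finset.sum_congr rfl (fun j (_ : j ∈ Finset.range N) => key j)
  rw [Finset.sum_add_distrib, Finset.sum_add_distrib] at hsum
  rw [Finset.sum_ite_eq' (Finset.range N) i, Finset.sum_ite_eq' (Finset.range N) (i+1)] at hsum
  rw [if_pos (Finset.mem_range.2 (by omega)), if_pos (Finset.mem_range.2 hN)] at hsum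
  have : d ^ (i+1) = d * d ^ i := by rw [pow_succ]; ring
  omega

lemma exch_dspan {d i : ℕ} (hd : 1 < d) {A : ℕ →₀ ℕ} (hAi : 2 * d - 1 ≤ A i) :
    dspan d (exch d i A) = dspan d A := by
  set N := A.support.sup id + i + 2 with hNdef
  have hiN : i + 1 < N := by omega
  have hA : ∀ j, N ≤ j → A j = 0 := fun j hj => support_bound (by omega) hj
  have e1 : exch d i A i = A i - d := by
    rw [exch_apply, if_pos rfl, if_neg (by omega)]
    omega
  have e2 : exch d i A (i+1) = A (i+1) + 1 := by
    rw [exch_apply, if_neg (by omega), if_pos rfl]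
    omega
  have e3 : ∀ j, j ≠ i → j ≠ i + 1 → exch d i A j = A j := by
    intro j h1 h2
    rw [exch_apply, if_neg h1, if_neg h2]
    omega
  have hE : ∀ j, N ≤ j → exch d i A j = 0 := by
    intro j hj
    rw [e3 j (by omega) (by omega), hA j hj]
  rw [dspan_eq_fspan hE, dspan_eq_fspan hA]
  ext n
  constructor
  · rintro ⟨c, hc, rfl⟩
    have hc' : ∀ j, c j ≤ exch d i A j := hc
    by_cases hci : c (i+1) ≤ A (i+1)
    · refine ⟨c, fun j => ?_, rfl⟩
      show c j ≤ A j
      rcases eq_or_ne j i with rfl | hj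
      · have := hc' j; rw [e1] at this; omega
      · rcases eq_or_ne j (i+1) with rfl | hj1
        · exact hci
        · have := hc' j; rwa [e3 j hj hj1] at this
    · have h1 : 1 ≤ c (i+1) := by omega
      have hcii := hc' i; rw [e1] at hcii
      refine ⟨Function.update (Function.update c i (c i + d)) (i + 1) (c (i + 1) - 1),
        fun j => ?_, ?_⟩
      all_goals
        have c2i1 : Function.update (Function.update c i (c i + d)) (i + 1) (c (i + 1) - 1) (i+1)
            = c (i+1) - 1 := Function.update_self _ _ _
        have c2i : Function.update (Function.update c i (c i + d)) (i + 1) (c (i + 1) - 1) i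
            = c i + d := by
          rw [Function.update_of_ne (by omega), Function.update_self]
        have c2o : ∀ j, j ≠ i → j ≠ i + 1 →
            Function.update (Function.update c i (c i + d)) (i + 1) (c (i + 1) - 1) j = c j := by
          intro j hj hj1
          rw [Function.update_of_ne hj1, Function.update_of_ne hj]
      · show Function.update (Function.update c i (c i + d)) (i + 1) (c (i + 1) - 1) j ≤ A j
        rcases eq_or_ne j i with rfl | hj
        · rw [c2i]; omega
        · rcases eq_or_ne j (i+1) with rfl | hj1
          · rw [c2i1]; have := hc' (i+1); rw [e2] at this; omega
          · rw [c2o j hj hj1]; have := hc' j; rwa [e3 j hj hj1] at this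
      · exact sum_exch (fun j hj hj1 => (c2o j hj hj1).symm) c2i (by rw [c2i1]; omega) hiN
  · rintro ⟨c, hc, rfl⟩
    have hc' : ∀ j, c j ≤ A j := hc
    by_cases hci : c i ≤ A i - d
    · refine ⟨c, fun j => ?_, rfl⟩
      show c j ≤ exch d i A j
      rcases eq_or_ne j i with rfl | hj
      · rw [e1]; exact hci
      · rcases eq_or_ne j (i+1) with rfl | hj1
        · rw [e2]; exact le_trans (hc' (i+1)) (by omega)
        · rw [e3 j hj hj1]; exact hc' j
    · have hcd : d ≤ c i := by have := hc' i; omega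
      refine ⟨Function.update (Function.update c i (c i - d)) (i + 1) (c (i + 1) + 1),
        fun j => ?_, ?_⟩
      all_goals
        have c2i1 : Function.update (Function.update c i (c i - d)) (i + 1) (c (i + 1) + 1) (i+1)
            = c (i+1) + 1 := Function.update_self _ _ _
        have c2i : Function.update (Function.update c i (c i - d)) (i + 1) (c (i + 1) + 1) i
            = c i - d := by
          rw [Function.update_of_ne (by omega), Function.update_self]
        have c2o : ∀ j, j ≠ i → j ≠ i + 1 →
            Function.update (Function.update c i (c i - d)) (i + 1) (c (i + 1) + 1) j = c j := by
          intro j hj hj1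
          rw [Function.update_of_ne hj1, Function.update_of_ne hj]
      · show Function.update (Function.update c i (c i - d)) (i + 1) (c (i + 1) + 1) j ≤ exch d i A j
        by_cases hj : j = i
        · rw [hj, c2i, e1]; have := hc' i; omega
        · by_cases hj1 : j = i + 1
          · rw [hj1, c2i1, e2]; have := hc' (i+1); omega
          · rw [c2o j hj hj1, e3 j hj hj1]; exact hc' j
      · exact (sum_exch (fun j hj hj1 => c2o j hj hj1) (by rw [c2i]; omega) c2i1 hiN).symm

lemma exch_tokens {d i : ℕ} (hd : 1 < d) {A : ℕ →₀ ℕ} (hAi : 2 * d - 1 ≤ A i) :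
    (exch d i A).sum (fun _ m => m) < A.sum (fun _ m => m) := by
  set N := A.support.sup id + i + 2 with hNdef
  have hiN : i + 1 < N := by omega
  have hA : ∀ j, N ≤ j → A j = 0 := fun j hj => support_bound (by omega) hj
  have hE : ∀ j, N ≤ j → exch d i A j = 0 := by
    intro j hj
    rw [exch_apply, if_neg (by omega), if_neg (by omega), hA j hj]
  rw [fsum_eq _ (fun _ => rfl) hA, fsum_eq _ (fun _ => rfl) hE]
  have key : ∀ j, exch d i A j + (if j = i then d else 0)
      = A j + (if j = i + 1 then 1 else 0) := by
    intro j
    rw [exch_apply]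
    split_ifs with h1 h2 h3 <;> subst_vars <;> omega
  have hsum := Finset.sum_congr rfl (fun j (_ : j ∈ Finset.range N) => key j)
  rw [Finset.sum_add_distrib, Finset.sum_add_distrib,
    Finset.sum_ite_eq' (Finset.range N) i, Finset.sum_ite_eq' (Finset.range N) (i+1),
    if_pos (Finset.mem_range.2 (by omega)), if_pos (Finset.mem_range.2 hiN)] at hsum
  omega

lemma exists_normal {d : ℕ} (hd : 1 < d) (A : ℕ →₀ ℕ) :
    ∃ B : ℕ →₀ ℕ, (∀ i, B i ≤ 2 * (d - 1)) ∧ dspan d A = dspan d B := by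
  generalize hn : A.sum (fun _ m => m) = n
  induction n using Nat.strong_induction_on generalizing A with
  | _ n ih =>
    by_cases hnorm : ∀ i, A i ≤ 2 * (d - 1)
    · exact ⟨A, hnorm, rfl⟩
    · push_neg at hnorm
      obtain ⟨i, hi⟩ := hnorm
      have hAi : 2 * d - 1 ≤ A i := by omega
      obtain ⟨B, hB, hspan⟩ := ih _ (hn ▸ exch_tokens hd hAi) (exch d i A) rfl
      exact ⟨B, hB, (exch_dspan hd hAi).symm.trans hspan⟩

lemma sum_succ_decomp {d N : ℕ} (c : ℕ → ℕ) :
    ∑ i ∈ Finset.range (N+1), c i * d ^ i = c 0 + d * ∑ i ∈ Finset.range N, c (i+1) * d ^ i := by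
  rw [Finset.sum_range_succ', pow_zero, mul_one, Finset.mul_sum]
  have : ∀ i, c (i+1) * d ^ (i+1) = d * (c (i+1) * d ^ i) := by
    intro i; rw [pow_succ]; ring
  rw [Finset.sum_congr rfl (fun i _ => this i)]
  omega

lemma mem_fspan_succ {d N : ℕ} {b : ℕ → ℕ} {n : ℕ} :
    n ∈ fspan d (N+1) b ↔
      ∃ c0 h, c0 ≤ b 0 ∧ h ∈ fspan d N (fun i => b (i+1)) ∧ n = c0 + d * h := by
  constructor
  · rintro ⟨c, hc, rfl⟩
    exact ⟨c 0, ∑ i ∈ Finset.range N, c (i+1) * d ^ i, hc 0,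
      ⟨fun i => c (i+1), fun i => hc (i+1), rfl⟩, sum_succ_decomp c⟩
  · rintro ⟨c0, h, hc0, ⟨c, hc, rfl⟩, rfl⟩
    refine ⟨fun i => Nat.casesOn i c0 (fun k => c k), fun i => ?_, ?_⟩
    · cases i with
      | zero => exact hc0
      | succ k => exact hc k
    · rw [sum_succ_decomp]
      simp

lemma zero_mem_fspan {d N : ℕ} (b : ℕ → ℕ) : 0 ∈ fspan d N b :=
  ⟨fun _ => 0, fun _ => Nat.zero_le _, by simp⟩

lemma fspan_le_max {d N : ℕ} {b : ℕ → ℕ} {n : ℕ} (h : n ∈ fspan d N b) :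
    n ≤ ∑ i ∈ Finset.range N, b i * d ^ i := by
  obtain ⟨c, hc, rfl⟩ := h
  exact Finset.sum_le_sum (fun i _ => Nat.mul_le_mul_right _ (hc i))

lemma max_mem_fspan {d N : ℕ} (b : ℕ → ℕ) :
    (∑ i ∈ Finset.range N, b i * d ^ i) ∈ fspan d N b :=
  ⟨b, fun _ => le_rfl, rfl⟩

lemma mod_cases {d x : ℕ} (hd : 0 < d) (hx : x < 2*d) :
    x % d = x ∨ (d ≤ x ∧ x % d = x - d) := by
  by_cases h : x < d
  · exact Or.inl (Nat.mod_eq_of_lt h)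
  · right
    refine ⟨by omega, ?_⟩
    rw [Nat.mod_eq_sub_mod (by omega)]
    exact Nat.mod_eq_of_lt (by omega)

lemma dmul_eq_zero {d h : ℕ} (hd : 0 < d) (hh : d * h < d) : h = 0 := by
  rcases Nat.eq_zero_or_pos h with h0 | hpos
  · exact h0
  · exact absurd (Nat.le_mul_of_pos_right d hpos) (by omega)

lemma tail_iff {d N : ℕ} (hd : 1 < d) {b : ℕ → ℕ} (hb : ∀ i, b i ≤ 2*(d-1)) (h : ℕ) :
    (min (b 0) (d-1) + d * h ∈ fspan d (N+1) b) ↔ h ∈ fspan d N (fun i => b (i+1)) := by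
  set r := min (b 0) (d-1) with hr
  have hrd : r < d := by omega
  constructor
  · intro hm
    obtain ⟨c0, h', hc0, hh', heq⟩ := mem_fspan_succ.1 hm
    have hmod : c0 % d = r := by
      have h1 : (r + d * h) % d = r % d := Nat.add_mul_mod_self_left r d h
      have h2 : (c0 + d * h') % d = c0 % d := Nat.add_mul_mod_self_left c0 d h'
      rw [heq] at h1
      rw [h1] at h2  -- careful direction
      rw [Nat.mod_eq_of_lt hrd] at h2
      omega
    have hb0 := hb 0
    have hc0r : c0 = r := by
      rcases mod_cases (show 0 < d by omega) (show c0 < 2*d by omega) with h1 | ⟨h1, h2⟩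
      · omega
      · -- c0 = r + d, so b 0 ≥ r + d ≥ d, hence r = d - 1, c0 = 2d-1 > 2(d-1) ≥ b 0, contra
        omega
    have : h = h' := by
      have : d * h = d * h' := by omega
      exact Nat.eq_of_mul_eq_mul_left (by omega) this
    rwa [this]
  · intro hm
    exact mem_fspan_succ.2 ⟨r, h, min_le_left _ _, hm, rfl⟩

lemma fspan_inj {d : ℕ} (hd : 1 < d) :
    ∀ N (b b' : ℕ → ℕ), (∀ i, b i ≤ 2*(d-1)) → (∀ i, b' i ≤ 2*(d-1)) →
      fspan d N b = fspan d N b' → ∀ i, i < N → b i = b' i := by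
  intro N
  induction N with
  | zero => intro b b' _ _ _ i hi; omega
  | succ N ih =>
    intro b b' hb hb' hsp
    -- maxima agree
    have hM : ∑ i ∈ Finset.range (N+1), b i * d ^ i
        = ∑ i ∈ Finset.range (N+1), b' i * d ^ i := by
      apply le_antisymm
      · exact fspan_le_max (hsp ▸ max_mem_fspan b)
      · exact fspan_le_max (hsp.symm ▸ max_mem_fspan b')
    -- residues mod d agree
    have hmod : b 0 % d = b' 0 % d := by
      have h1 := sum_succ_decomp (d := d) (N := N) b
      have h2 := sum_succ_decomp (d := d) (N := N) b'
      have e1 : (∑ i ∈ Finset.range (N+1), b i * d ^ i) % d = b 0 % d := by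
        rw [h1]; exact Nat.add_mul_mod_self_left _ _ _
      have e2 : (∑ i ∈ Finset.range (N+1), b' i * d ^ i) % d = b' 0 % d := by
        rw [h2]; exact Nat.add_mul_mod_self_left _ _ _
      rw [← e1, ← e2, hM]
    -- min residues agree
    have hminle : ∀ (c c' : ℕ → ℕ), (∀ i, c' i ≤ 2*(d-1)) →
        fspan d (N+1) c = fspan d (N+1) c' →
        min (c 0) (d-1) ≤ min (c' 0) (d-1) := by
      intro c c' hc' hspan
      have hmem : min (c 0) (d-1) ∈ fspan d (N+1) c := by
        have h0 : min (c 0) (d-1) + d * 0 ∈ fspan d (N+1) c :=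
          mem_fspan_succ.2 ⟨min (c 0) (d-1), 0, min_le_left _ _, zero_mem_fspan _, rfl⟩
        simpa using h0
      rw [hspan] at hmem
      obtain ⟨c0, h', hc0, _, heq⟩ := mem_fspan_succ.1 hmem
      have hh0 : h' = 0 := dmul_eq_zero (show 0 < d by omega) (by omega)
      rw [hh0, Nat.mul_zero] at heq
      have := hc' 0
      omega
    have hmin : min (b 0) (d-1) = min (b' 0) (d-1) :=
      le_antisymm (hminle b b' hb' hsp) (hminle b' b hb hsp.symm)
    -- b 0 = b' 0
    have hb00 : b 0 = b' 0 := by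
      have hx := hb 0
      have hy := hb' 0
      rcases mod_cases (show 0 < d by omega) (show b 0 < 2*d by omega) with h1 | h1 <;>
        rcases mod_cases (show 0 < d by omega) (show b' 0 < 2*d by omega) with h2 | h2 <;>
          omega
    -- tail spans agree
    have htail : fspan d N (fun i => b (i+1)) = fspan d N (fun i => b' (i+1)) := by
      ext h
      rw [← tail_iff hd hb h, ← tail_iff hd hb' h, hmin, hsp]
    have := ih (fun i => b (i+1)) (fun i => b' (i+1)) (fun i => hb (i+1)) (fun i => hb' (i+1)) htail
    intro i hi
    cases i with
    | zero => exact hb00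
    | succ k => exact this k (by omega)

lemma dspan_inj {d : ℕ} (hd : 1 < d) {B B' : ℕ →₀ ℕ}
    (hB : ∀ i, B i ≤ 2*(d-1)) (hB' : ∀ i, B' i ≤ 2*(d-1))
    (hsp : dspan d B = dspan d B') : B = B' := by
  set N := B.support.sup id + B'.support.sup id + 1 with hN
  have h1 : ∀ j, N ≤ j → B j = 0 := fun j hj => support_bound (by omega) hj
  have h2 : ∀ j, N ≤ j → B' j = 0 := fun j hj => support_bound (by omega) hj
  rw [dspan_eq_fspan h1, dspan_eq_fspan h2] at hsp
  have key := fspan_inj hd N (B ·) (B' ·) hB hB' hsp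
  ext a
  by_cases ha : a < N
  · exact key a ha
  · rw [h1 a (by omega), h2 a (by omega)]


/-- Every `d`-collection has the same span as a unique normal `d`-collection. -/
theorem stmt_12 (d : ℕ) (hd : 1 < d) (A : ℕ →₀ ℕ) :
    ∃! B : ℕ →₀ ℕ, (∀ i, B i ≤ 2 * (d - 1)) ∧ dspan d A = dspan d B := by
  obtain ⟨B, hB, hs⟩ := exists_normal hd A
  refine ⟨B, ⟨hB, hs⟩, ?_⟩
  rintro B' ⟨hB', hs'⟩
  exact dspan_inj hd hB' hB (hs'.symm.trans hs)
end
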